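/- In any reserve system, a matching μ is eligibility-compliant, respects priorities, is non-wasteful, and has maximum cardinality if and only if there exists an eligibility-compliant matching μ₀ of maximum cardinality such that μ is obtained from μ₀ by a finite (possibly empty) sequence of swap steps and μ is terminal. -/

import Mathlib

/-!
A swap step replaces one matched agent by one unmatched agent, so it preserves
eligibility-compliance and the number of matched agents; the end of a swap chain starting at
a maximum-cardinality matching therefore has maximum cardinality. Maximum cardinality forces
non-wastefulness, since an eligible unmatched agent could otherwise be added to a category
that is not full. Terminality gives respect for priorities: an unmatched agent who beats a
matched agent at `c` also beats the `≻_c`-least agent at `c`, so a swap step would apply.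
Conversely, a matching satisfying the four axioms is reached from itself by the empty chain,
and respect for priorities rules out every swap step.
-/

open Finset

variable {I C : Type*}

/-- Agent `i` is eligible for category `c` when `i ≻_c ∅`. -/
def Eligible (prio : C → Option I → Option I → Prop) (i : I) (c : C) : Prop :=
  prio c (some i) none

/-- `μ` is a matching: the set of agents assigned to each category `c`
has at most `q c` elements. -/
def IsMatching [Fintype I] [DecidableEq C] (q : C → ℕ) (μ : I → Option C) : Prop :=
  ∀ c : C, (Finset.univ.filter (fun i => μ i = some c)).card ≤ q c

/-- `μ` is eligibility-compliant: assigned agents are eligible. -/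
def Compliant (prio : C → Option I → Option I → Prop) (μ : I → Option C) : Prop :=
  ∀ (i : I) (c : C), μ i = some c → Eligible prio i c

/-- The number of agents matched under `μ`. -/
def matchedCount [Fintype I] (μ : I → Option C) : ℕ :=
  (Finset.univ.filter (fun i => (μ i).isSome)).card

/-- `μ` has maximum cardinality among eligibility-compliant matchings. -/
def MaxCard [Fintype I] [DecidableEq C] (q : C → ℕ)
    (prio : C → Option I → Option I → Prop) (μ : I → Option C) : Prop :=
  ∀ μ' : I → Option C, IsMatching q μ' → Compliant prio μ' →
    matchedCount μ' ≤ matchedCount μ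

/-- Non-wastefulness: an eligible unmatched agent implies the category is full. -/
def NonWasteful [Fintype I] [DecidableEq C] (q : C → ℕ)
    (prio : C → Option I → Option I → Prop) (μ : I → Option C) : Prop :=
  ∀ (i : I) (c : C), Eligible prio i c → μ i = none →
    (Finset.univ.filter (fun j => μ j = some c)).card = q c

/-- Respect for priorities: a matched agent has higher priority (at its
category) than every unmatched agent. -/
def RespectsPriorities (prio : C → Option I → Option I → Prop)
    (μ : I → Option C) : Prop :=
  ∀ (i i' : I) (c : C), μ i = some c → μ i' = none → prio c (some i) (some i')

/-- `μ'` is obtained from `μ` by a swap step at category `c`: an unmatched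
agent `i`, eligible for `c`, replaces the `≻_c`-least agent `i'` currently
assigned to `c`, where `i ≻_c i'`. -/
def SwapStep (prio : C → Option I → Option I → Prop) (c : C)
    (μ μ' : I → Option C) : Prop :=
  ∃ i i' : I,
    μ i = none ∧ Eligible prio i c ∧
    μ i' = some c ∧
    (∀ j : I, μ j = some c → j ≠ i' → prio c (some j) (some i')) ∧
    prio c (some i) (some i') ∧
    μ' i = some c ∧ μ' i' = none ∧
    (∀ j : I, j ≠ i → j ≠ i' → μ' j = μ j)

/-- One swap step between eligibility-compliant matchings. -/
def SwapRel [Fintype I] [DecidableEq C] (q : C → ℕ)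
    (prio : C → Option I → Option I → Prop) (μ μ' : I → Option C) : Prop :=
  IsMatching q μ ∧ Compliant prio μ ∧ IsMatching q μ' ∧ Compliant prio μ' ∧
    ∃ c : C, SwapStep prio c μ μ'

/-- `μ` is terminal: no swap step applies to `μ`. -/
def Terminal (prio : C → Option I → Option I → Prop) (μ : I → Option C) : Prop :=
  ¬ ∃ (i i' : I) (c : C),
      μ i = none ∧ Eligible prio i c ∧ μ i' = some c ∧
      (∀ j : I, μ j = some c → j ≠ i' → prio c (some j) (some i')) ∧
      prio c (some i) (some i')

/-- The strict part `▷` of the precedence preorder, extended to `C ∪ {∅}`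
by `c ▷ ∅` for every category `c`. -/
def StrictPrec (prec : C → C → Prop) : Option C → Option C → Prop
  | some c, some c' => prec c c' ∧ ¬ prec c' c
  | some _, none => True
  | none, _ => False

/-- The number of agents assigned to preferential treatment categories. -/
def benefCount [Fintype I] [DecidableEq C] (Cstar : Finset C)
    (μ : I → Option C) : ℕ :=
  ∑ c ∈ Cstar, (Finset.univ.filter (fun i => μ i = some c)).card

/-- `μ` is a maximum beneficiary assignment. -/
def MaxBenef [Fintype I] [DecidableEq C] (q : C → ℕ)
    (prio : C → Option I → Option I → Prop) (Cstar : Finset C)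
    (μ : I → Option C) : Prop :=
  ∀ μ' : I → Option C, IsMatching q μ' → Compliant prio μ' →
    benefCount Cstar μ' ≤ benefCount Cstar μ

/-- Order preservation by swapping. -/
def OrderPresSwap (prio : C → Option I → Option I → Prop) (prec : C → C → Prop)
    (μ : I → Option C) : Prop :=
  ¬ ∃ (i j : I) (ci cj : C),
      μ i = some ci ∧ μ j = some cj ∧
      StrictPrec prec (some cj) (some ci) ∧
      prio cj (some i) (some j) ∧
      Eligible prio j ci ∧ Eligible prio i cj

/-- Respect for precedence over categories. -/
def RespectsPrec [Fintype I] [DecidableEq C] (q : C → ℕ)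
    (prio : C → Option I → Option I → Prop) (Cstar : Finset C)
    (prec : C → C → Prop) (μ : I → Option C) : Prop :=
  ¬ ∃ (i j : I) (cj : C),
      μ j = some cj ∧
      StrictPrec prec (some cj) (μ i) ∧
      prio cj (some i) (some j) ∧
      ∃ μ' : I → Option C,
        IsMatching q μ' ∧ Compliant prio μ' ∧
        (∀ (k : I) (ck : C), μ k = some ck →
          StrictPrec prec (some ck) (some cj) → μ' k = μ k) ∧
        (∀ ℓ : I, μ ℓ = some cj → prio cj (some ℓ) (some i) → μ' ℓ = μ ℓ) ∧
        μ' i = some cj ∧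
        MaxCard q prio μ' ∧ MaxBenef q prio Cstar μ'

/-- Order preservation for a hybrid sequential reserve system with open
categories `c01` (processed first) and `c02` (processed last). -/
def OrderPresHybrid (prio : C → Option I → Option I → Prop) (Cstar : Finset C)
    (c01 c02 : C) (μ : I → Option C) : Prop :=
  ∀ (i j : I) (cj : C), μ j = some cj → prio cj (some i) (some j) →
    ((∀ ci : C, μ i = some ci → (ci ∈ Cstar ∨ ci = c02) →
        Eligible prio j ci → cj ≠ c01) ∧
     ((cj ∈ Cstar ∨ cj = c01) → Eligible prio i cj → μ i ≠ some c02))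

/-- `P'` is an `i`-improvement of `P`: the orders agree off `i`, and `i`'s
priority weakly increases in every category. -/
def Improves (i : I) (P P' : C → Option I → Option I → Prop) : Prop :=
  ∀ c : C,
    (∀ x y : Option I, x ≠ some i → y ≠ some i → (P' c x y ↔ P c x y)) ∧
    (∀ x : Option I, x ≠ some i → P c (some i) x → P' c (some i) x)

open Function Relation

theorem Finset.exists_forall_ne_rel_of_injective {α β : Type*} (r : β → β → Prop)
    [IsStrictTotalOrder β r] {f : α → β} (hf : Injective f) {s : Finset α}
    (hs : s.Nonempty) : ∃ m ∈ s, ∀ x ∈ s, x ≠ m → r (f x) (f m) := by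
  classical
  let := linearOrderOfSTO r
  obtain ⟨m, hm, hmax⟩ := s.exists_max_image f hs
  exact ⟨m, hm, fun x hx hxm => (hmax x hx).lt_of_ne (hf.ne hxm)⟩

theorem Finset.card_filter_update_add {α : Type*} [Fintype I] [DecidableEq I]
    (p : α → Prop) [DecidablePred p] (μ : I → α) (i : I) (x : α) :
    #{j | p (update μ i x j)} + (if p (μ i) then 1 else 0) =
      #{j | p (μ j)} + (if p x then 1 else 0) := by
  simp only [Finset.card_filter]
  rw [← Finset.add_sum_erase _ _ (Finset.mem_univ i),
    ← Finset.add_sum_erase _ (fun j => if p (μ j) then 1 else 0) (Finset.mem_univ i),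
    Finset.sum_congr rfl fun j hj => by rw [update_of_ne (Finset.ne_of_mem_erase hj)]]
  simp only [update_self]
  ring

section

variable {prio : C → Option I → Option I → Prop} {μ : I → Option C}

theorem SwapStep.eq_update [DecidableEq I] {c : C} {μ' : I → Option C}
    (h : SwapStep prio c μ μ') :
    ∃ i i', μ i = none ∧ μ i' = some c ∧ μ' = update (update μ i' none) i (some c) := by
  obtain ⟨i, i', hi, -, hi', -, -, hμ'i, hμ'i', hoff⟩ := h
  have hii' : i ≠ i' := by rintro rfl; simp_all
  refine ⟨i, i', hi, hi', funext fun j => ?_⟩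
  rcases eq_or_ne j i with rfl | hji
  · simp [hμ'i]
  rcases eq_or_ne j i' with rfl | hji'
  · simp [hμ'i', hji]
  · simp [hoff j hji hji', hji, hji']

theorem Compliant.update [DecidableEq I] (hc : Compliant prio μ) {i : I} {c : C}
    (hi : Eligible prio i c) : Compliant prio (update μ i (some c)) := by
  intro j c' hj
  rcases eq_or_ne j i with rfl | hji
  · obtain rfl : c = c' := by simpa using hj
    exact hi
  · exact hc j c' (by simpa [hji] using hj)

theorem RespectsPriorities.terminal [∀ c, Std.Asymm (prio c)]
    (h : RespectsPriorities prio μ) : Terminal prio μ :=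
  fun ⟨i, i', c, hi, _, hi', _, hii'⟩ => asymm hii' (h i' i c hi' hi)

variable [Fintype I]

theorem Terminal.respectsPriorities [∀ c, IsStrictTotalOrder (Option I) (prio c)]
    (hterm : Terminal prio μ) (hc : Compliant prio μ) : RespectsPriorities prio μ := by
  classical
  intro i i' c hi hi'
  have hne : some i ≠ some i' := by rintro ⟨⟩; simp_all
  refine (trichotomous_of (prio c) _ _).resolve_right (not_or_intro hne fun hi'i => ?_)
  obtain ⟨m, hm, hleast⟩ := Finset.exists_forall_ne_rel_of_injective (prio c)
    (Option.some_injective I) (s := {j | μ j = some c}) ⟨i, by simpa using hi⟩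
  have hi'm : prio c (some i') (some m) := by
    rcases eq_or_ne i m with rfl | him
    · exact hi'i
    · exact _root_.trans hi'i (hleast i (by simpa using hi) him)
  exact hterm ⟨i', m, c, hi', _root_.trans hi'i (hc i c hi), by simpa using hm,
    fun j hj hjm => hleast j (by simpa using hj) hjm, hi'm⟩

theorem matchedCount_update_of_eq_none [DecidableEq I] {i : I} (hi : μ i = none) (c : C) :
    matchedCount (update μ i (some c)) = matchedCount μ + 1 := by
  have := Finset.card_filter_update_add (fun o : Option C => o.isSome) μ i (some c)
  simp_all [matchedCount]

theorem SwapStep.matchedCount_eq {c : C} {μ' : I → Option C} (h : SwapStep prio c μ μ') :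
    matchedCount μ' = matchedCount μ := by
  classical
  obtain ⟨i, i', hi, hi', rfl⟩ := h.eq_update
  have hii' : i ≠ i' := by rintro rfl; simp_all
  have hdrop := Finset.card_filter_update_add (fun o : Option C => o.isSome) μ i' none
  rw [matchedCount_update_of_eq_none (by simp [hii', hi])]
  simp_all [matchedCount]

variable [DecidableEq C] {q : C → ℕ}

theorem IsMatching.update [DecidableEq I] (hm : IsMatching q μ) {i : I} (hi : μ i = none)
    {c : C} (hc : #{j | μ j = some c} < q c) : IsMatching q (update μ i (some c)) := by
  intro c'
  have := Finset.card_filter_update_add (· = some c') μ i (some c)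
  rcases eq_or_ne c c' with rfl | hcc'
  · simp_all
  · simp_all [hm c']

theorem matchedCount_eq_of_swapRel_chain {μ₀ : I → Option C}
    (h : ReflTransGen (SwapRel q prio) μ₀ μ) : matchedCount μ = matchedCount μ₀ := by
  have : ReflTransGen Eq (matchedCount μ₀) (matchedCount μ) :=
    h.lift matchedCount fun _ _ ⟨_, _, _, _, _, hstep⟩ => hstep.matchedCount_eq.symm
  rw [reflTransGen_eq_self] at this
  exact this.symm

theorem MaxCard.of_swapRel_chain {μ₀ : I → Option C} (h₀ : MaxCard q prio μ₀)
    (h : ReflTransGen (SwapRel q prio) μ₀ μ) : MaxCard q prio μ := by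
  intro μ' hm hc
  rw [matchedCount_eq_of_swapRel_chain h]
  exact h₀ μ' hm hc

theorem Compliant.of_swapRel_chain {μ₀ : I → Option C} (h₀ : Compliant prio μ₀)
    (h : ReflTransGen (SwapRel q prio) μ₀ μ) : Compliant prio μ := by
  rcases h.cases_tail with rfl | ⟨_, -, _, _, _, hc, _⟩
  exacts [h₀, hc]

theorem MaxCard.nonWasteful (hmax : MaxCard q prio μ) (hm : IsMatching q μ)
    (hc : Compliant prio μ) : NonWasteful q prio μ := by
  classical
  intro i c hi hμi
  by_contra hfull
  have hgrow := hmax _ (hm.update hμi ((hm c).lt_of_ne hfull)) (hc.update hi)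
  rw [matchedCount_update_of_eq_none hμi] at hgrow
  omega

end

theorem four_axioms_iff_MMA_induced_general
    [Fintype I] [DecidableEq C]
    (q : C → ℕ) (prio : C → Option I → Option I → Prop)
    (hstrict : ∀ c : C, IsStrictTotalOrder (Option I) (prio c))
    (μ : I → Option C) (hμ : IsMatching q μ) :
    (Compliant prio μ ∧ RespectsPriorities prio μ ∧ NonWasteful q prio μ ∧
        MaxCard q prio μ) ↔
      ∃ μ₀ : I → Option C,
        IsMatching q μ₀ ∧ Compliant prio μ₀ ∧ MaxCard q prio μ₀ ∧
          Relation.ReflTransGen (SwapRel q prio) μ₀ μ ∧ Terminal prio μ := by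
  constructor
  · rintro ⟨hcomp, hrp, -, hmax⟩
    exact ⟨μ, hμ, hcomp, hmax, .refl, hrp.terminal⟩
  · rintro ⟨μ₀, -, hcomp₀, hmax₀, hchain, hterm⟩
    have hcomp := hcomp₀.of_swapRel_chain hchain
    have hmax := hmax₀.of_swapRel_chain hchain
    exact ⟨hcomp, hterm.respectsPriorities hcomp, hmax.nonWasteful hμ hcomp, hmax⟩

/-- A matching satisfies the four fundamental axioms iff it is
MMA-induced, i.e. it is a terminal matching obtained from some
eligibility-compliant matching of maximum cardinality by finitely many
swap steps. -/
theorem four_axioms_iff_MMA_induced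
    [Fintype I] [Fintype C] [DecidableEq C]
    (q : C → ℕ) (prio : C → Option I → Option I → Prop)
    (hstrict : ∀ c : C, IsStrictTotalOrder (Option I) (prio c))
    (μ : I → Option C) (hμ : IsMatching q μ) :
    (Compliant prio μ ∧ RespectsPriorities prio μ ∧ NonWasteful q prio μ ∧
        MaxCard q prio μ) ↔
      ∃ μ₀ : I → Option C,
        IsMatching q μ₀ ∧ Compliant prio μ₀ ∧ MaxCard q prio μ₀ ∧
          Relation.ReflTransGen (SwapRel q prio) μ₀ μ ∧ Terminal prio μ :=
  four_axioms_iff_MMA_induced_general q prio hstrict μ hμ
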